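/- Let 0 < θ < 1/3 and 0 < ρ < 10⁻³, and define g(h) = nθ(1−3θ)(‖h‖₄⁴·h − h^⊙3) and M(h) = nθ(1−3θ)[‖h‖₄⁴·I + 2‖h‖₄⁴·hhᵀ − 3·diag(h^⊙2)] for h ∈ Sⁿ⁻¹ (these equal the expected Riemannian gradient and expected Riemannian Hessian of L'' under the Bernoulli–Rademacher model). Then: (i) for every h ∈ 𝓗₁'', min over unit z ⊥ h of zᵀM(h)z ≥ nθ(1−3θ)(1 − 24√ρ) > 0; (ii) for every h in the (ρ,r)-neighborhood of a stationary point with r > 1 nonzero entries, min over unit z ⊥ h of zᵀM(h)z ≤ −nθ(1−3θ)(2 − 24√ρ)/r < 0; (iii) for every h ∈ 𝓗₃'', ‖g(h)‖ ≥ θ(1−3θ)ρ²/n > 0. -/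

import Mathlib

open Matrix MeasureTheory ProbabilityTheory Finset Filter

noncomputable section

/-- The Euclidean (`ℓ²`) norm of a vector in `Fin n → ℝ`. -/
def enorm2 {n : ℕ} (v : Fin n → ℝ) : ℝ := Real.sqrt (∑ j, v j ^ 2)

/-- The spectral norm (ℓ² operator norm) of a square real matrix. -/
def spec {n : ℕ} (A : Matrix (Fin n) (Fin n) ℝ) : ℝ := ‖Matrix.toEuclideanCLM (𝕜 := ℝ) A‖

/-- The Euclidean gradient of `F : ℝⁿ → ℝ`, given by the partial derivatives. -/
def egrad {n : ℕ} (F : (Fin n → ℝ) → ℝ) (h : Fin n → ℝ) : Fin n → ℝ :=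
  fun j => fderiv ℝ F h (Pi.single j 1)

/-- The Euclidean Hessian of `F : ℝⁿ → ℝ`, given by the second partial derivatives. -/
def ehess {n : ℕ} (F : (Fin n → ℝ) → ℝ) (h : Fin n → ℝ) : Matrix (Fin n) (Fin n) ℝ :=
  Matrix.of fun j k => fderiv ℝ (fun v => fderiv ℝ F v (Pi.single j 1)) h (Pi.single k 1)

/-- Projection `P_{h⊥} = I - h hᵀ` onto the tangent space of the unit sphere at `h`. -/
def Pperp {n : ℕ} (h : Fin n → ℝ) : Matrix (Fin n) (Fin n) ℝ := 1 - Matrix.vecMulVec h h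

/-- Riemannian gradient `∇̂F(h) = P_{h⊥} ∇F(h)`. -/
def rgrad {n : ℕ} (F : (Fin n → ℝ) → ℝ) (h : Fin n → ℝ) : Fin n → ℝ :=
  (Pperp h).mulVec (egrad F h)

/-- Riemannian Hessian `ĤF(h) = P_{h⊥} H_F(h) P_{h⊥} - ⟨∇F(h), h⟩ P_{h⊥}`. -/
def rhess {n : ℕ} (F : (Fin n → ℝ) → ℝ) (h : Fin n → ℝ) : Matrix (Fin n) (Fin n) ℝ :=
  Pperp h * ehess F h * Pperp h - (egrad F h ⬝ᵥ h) • Pperp h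

/-- The unit sphere `S^{n-1} ⊆ ℝⁿ`. -/
def usph (n : ℕ) : Set (Fin n → ℝ) := {h | enorm2 h = 1}

/-- The objective `L(h) = -(1/(4N)) ∑_i ‖C_{x_i} U h‖₄⁴`. -/
def Lobj {n N : ℕ} (x : Fin N → Fin n → ℝ) (U : Matrix (Fin n) (Fin n) ℝ)
    (h : Fin n → ℝ) : ℝ :=
  -(1 / (4 * (N : ℝ))) * ∑ i, ∑ j, ((Matrix.circulant (x i) * U).mulVec h j) ^ 4

/-- Manifold gradient descent iterates. -/
def mgdIter {n : ℕ} (F : (Fin n → ℝ) → ℝ) (γ : ℝ) (h0 : Fin n → ℝ) : ℕ → Fin n → ℝ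
  | 0 => h0
  | t + 1 =>
    let w := mgdIter F γ h0 t - γ • rgrad F (mgdIter F γ h0 t)
    (enorm2 w)⁻¹ • w

/-- `h₀` is a stationary point with `r` nonzero entries: each nonzero entry equals `±1/√r`. -/
def IsStatPoint {n : ℕ} (h₀ : Fin n → ℝ) (r : ℕ) : Prop :=
  (∀ j, h₀ j = 0 ∨ h₀ j = 1 / Real.sqrt r ∨ h₀ j = -(1 / Real.sqrt r)) ∧
  (Finset.univ.filter fun j => h₀ j ≠ 0).card = r

/-- `h` is in the `(ρ,r)`-neighborhood of `h₀`. -/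
def nbhd {n : ℕ} (ρ : ℝ) (r : ℕ) (h₀ h : Fin n → ℝ) : Prop :=
  ∀ j, |h j ^ 2 - h₀ j ^ 2| ≤ ρ / r

def H1'' (n : ℕ) (ρ : ℝ) : Set (Fin n → ℝ) :=
  {h | enorm2 h = 1 ∧ ∃ h₀, IsStatPoint h₀ 1 ∧ nbhd ρ 1 h₀ h}

def H2'' (n : ℕ) (ρ : ℝ) : Set (Fin n → ℝ) :=
  {h | enorm2 h = 1 ∧ ∃ r h₀, 1 < r ∧ IsStatPoint h₀ r ∧ nbhd ρ r h₀ h}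

def H3'' (n : ℕ) (ρ : ℝ) : Set (Fin n → ℝ) := usph n \ (H1'' n ρ ∪ H2'' n ρ)

/-- Symmetric positive semidefinite square root (junk value `0` off the PSD cone). -/
def matSqrt {n : ℕ} (Q : Matrix (Fin n) (Fin n) ℝ) : Matrix (Fin n) (Fin n) ℝ :=
  letI := Classical.dec Q.PosSemidef
  if hQ : Q.PosSemidef then
    (hQ.1.eigenvectorUnitary : Matrix (Fin n) (Fin n) ℝ) *
      Matrix.diagonal ((↑) ∘ (hQ.1.eigenvalues · |>.sqrt)) *
      (star hQ.1.eigenvectorUnitary : Matrix (Fin n) (Fin n) ℝ) else 0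

/-- Inverse of the symmetric positive definite square root. -/
def matInvSqrt {n : ℕ} (Q : Matrix (Fin n) (Fin n) ℝ) : Matrix (Fin n) (Fin n) ℝ :=
  (matSqrt Q)⁻¹

/-- The rotation `(C_fᵀ C_f)^{1/2} C_f⁻¹`. -/
def rotMat {n : ℕ} (f : Fin n → ℝ) : Matrix (Fin n) (Fin n) ℝ :=
  matSqrt ((Matrix.circulant f)ᵀ * Matrix.circulant f) * (Matrix.circulant f)⁻¹

def H1set {n : ℕ} (f : Fin n → ℝ) (ρ : ℝ) : Set (Fin n → ℝ) :=
  (fun h => (rotMat f).mulVec h) '' H1'' n ρ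

def H2set {n : ℕ} (f : Fin n → ℝ) (ρ : ℝ) : Set (Fin n → ℝ) :=
  (fun h => (rotMat f).mulVec h) '' H2'' n ρ

def H3set {n : ℕ} (f : Fin n → ℝ) (ρ : ℝ) : Set (Fin n → ℝ) :=
  (fun h => (rotMat f).mulVec h) '' H3'' n ρ

/-- The `n`-point DFT of a real vector. -/
def dftv {n : ℕ} (f : Fin n → ℝ) : Fin n → ℂ :=
  fun j => ∑ k, (f k : ℂ) *
    Complex.exp (-2 * Real.pi * Complex.I * (j : ℕ) * (k : ℕ) / n)

/-- The inverse `n`-point DFT. -/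
def idftv {n : ℕ} (v : Fin n → ℂ) : Fin n → ℂ :=
  fun k => (n : ℂ)⁻¹ * ∑ j, v j *
    Complex.exp (2 * Real.pi * Complex.I * (j : ℕ) * (k : ℕ) / n)

/-- The condition number `κ = max_j |𝓕f_j| / min_k |𝓕f_k|`. -/
def condNum {n : ℕ} (f : Fin n → ℝ) : ℝ :=
  (⨆ j, ‖dftv f j‖) / (⨅ j, ‖dftv f j‖)

/-- The Bernoulli–Rademacher distribution on ℝ with parameter θ. -/
def bernRad (θ : ℝ) : Measure ℝ :=
  ENNReal.ofReal (θ / 2) • Measure.dirac 1 + ENNReal.ofReal (θ / 2) • Measure.dirac (-1) +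
    ENNReal.ofReal (1 - θ) • Measure.dirac 0

/-- The matrix `(1/(θnN)) ∑ᵢ C_{yᵢ}ᵀ C_{yᵢ}`. -/
def Qmat {n N : ℕ} (θ : ℝ) (y : Fin N → Fin n → ℝ) : Matrix (Fin n) (Fin n) ℝ :=
  (1 / (θ * n * N)) • ∑ i, (Matrix.circulant (y i))ᵀ * Matrix.circulant (y i)

/-- The preconditioner `R = ((1/(θnN)) ∑ᵢ C_{yᵢ}ᵀ C_{yᵢ})^{-1/2}`. -/
def Rmat {n N : ℕ} (θ : ℝ) (y : Fin N → Fin n → ℝ) : Matrix (Fin n) (Fin n) ℝ :=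
  matInvSqrt (Qmat θ y)


/-- `g(h) = nθ(1-3θ)(‖h‖₄⁴ h - h^{⊙3})`, the expected Riemannian gradient. -/
def gvec {n : ℕ} (θ : ℝ) (h : Fin n → ℝ) : Fin n → ℝ :=
  ((n : ℝ) * θ * (1 - 3 * θ)) • ((∑ j, h j ^ 4) • h - fun j => h j ^ 3)

/-- `M(h) = nθ(1-3θ)[‖h‖₄⁴ I + 2‖h‖₄⁴ h hᵀ - 3 diag(h^{⊙2})]`, the expected Riemannian Hessian. -/
def Mmat {n : ℕ} (θ : ℝ) (h : Fin n → ℝ) : Matrix (Fin n) (Fin n) ℝ :=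
  ((n : ℝ) * θ * (1 - 3 * θ)) •
    ((∑ j, h j ^ 4) • (1 : Matrix (Fin n) (Fin n) ℝ) +
      (2 * ∑ j, h j ^ 4) • Matrix.vecMulVec h h -
      (3 : ℝ) • Matrix.diagonal (fun j => h j ^ 2))


/-! ### Auxiliary lemmas -/

lemma enorm2_eq_one' {n : ℕ} {v : Fin n → ℝ} (h : enorm2 v = 1) : ∑ j, v j ^ 2 = 1 :=
  Real.sqrt_eq_one.mp h

lemma sqrt_facts' {ρ : ℝ} (h1 : 0 < ρ) (h2 : ρ < 1/1000) :
    ρ ≤ Real.sqrt ρ ∧ Real.sqrt ρ < 1/24 := by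
  have hs : Real.sqrt ρ ^ 2 = ρ := Real.sq_sqrt h1.le
  have hs0 : 0 ≤ Real.sqrt ρ := Real.sqrt_nonneg ρ
  constructor
  · nlinarith [mul_nonneg hs0 hs0]
  · nlinarith [sq_nonneg (Real.sqrt ρ - 1/24)]

lemma quadform' {n : ℕ} (θ : ℝ) (h z : Fin n → ℝ) (hz : ∑ j, z j ^ 2 = 1)
    (horth : z ⬝ᵥ h = 0) :
    z ⬝ᵥ (Mmat θ h).mulVec z
      = ((n:ℝ) * θ * (1 - 3*θ)) * ((∑ j, h j ^ 4) - 3 * ∑ j, h j ^ 2 * z j ^ 2) := by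
  set c := (n:ℝ) * θ * (1 - 3*θ) with hc
  set T := ∑ j, h j ^ 4 with hT
  have inner : ∀ i, (Mmat θ h).mulVec z i
      = c * (T * z i) + c * (2*T) * (h i * (∑ j, h j * z j)) - c * 3 * (h i ^ 2 * z i) := by
    intro i
    show (∑ j, Mmat θ h i j * z j) = _
    calc ∑ j, Mmat θ h i j * z j
        = ∑ j, ((if i = j then c * (T * z j) else 0) + c*(2*T)*(h i * (h j * z j))
            - (if i = j then c*3*(h j ^2 * z j) else 0)) := by
          apply Finset.sum_congr rfl; intro j _
          by_cases hij : i = j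
          · subst hij
            simp [Mmat, Matrix.one_apply, Matrix.vecMulVec_apply, ← hc, ← hT]; ring
          · simp [Mmat, Matrix.one_apply, Matrix.vecMulVec_apply, hij, ← hc, ← hT]; ring
      _ = _ := by
          rw [Finset.sum_sub_distrib, Finset.sum_add_distrib, Finset.sum_ite_eq,
            Finset.sum_ite_eq]
          simp [Finset.mul_sum]
  have horth' : ∑ j, h j * z j = 0 := by
    rw [dotProduct] at horth; rw [← horth]; apply Finset.sum_congr rfl; intro j _; ring
  rw [dotProduct]
  rw [Finset.sum_congr rfl (fun i _ => by rw [inner i, horth']; ring_nf :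
    ∀ i ∈ univ, z i * (Mmat θ h).mulVec z i
      = c * T * z i ^2 - c * 3 * (h i ^2 * z i ^2))]
  rw [Finset.sum_sub_distrib, ← Finset.mul_sum, ← Finset.mul_sum, hz]
  ring

lemma core1' {n : ℕ} (θ ρ : ℝ) (hθ1 : 0 < θ) (hθ2 : θ < 1 / 3)
    (hρ1 : 0 < ρ) (hρ2 : ρ < 1 / 1000)
    (h h₀ : Fin n → ℝ) (hst : IsStatPoint h₀ 1) (hnb : nbhd ρ 1 h₀ h)
    (hh : ∑ j, h j ^ 2 = 1)
    (z : Fin n → ℝ) (hz : ∑ j, z j ^ 2 = 1) (horth : z ⬝ᵥ h = 0) :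
    1 - 24 * Real.sqrt ρ ≤ (∑ j, h j ^ 4) - 3 * ∑ j, h j ^ 2 * z j ^ 2 := by
  obtain ⟨hval, hcard⟩ := hst
  obtain ⟨i, hi⟩ := Finset.card_eq_one.mp hcard
  have hi0 : h₀ i ≠ 0 := by
    have : i ∈ Finset.univ.filter fun j => h₀ j ≠ 0 := hi ▸ Finset.mem_singleton_self i
    exact (Finset.mem_filter.mp this).2
  have hjz : ∀ j, j ≠ i → h₀ j = 0 := by
    intro j hj
    by_contra hc
    have : j ∈ ({i} : Finset (Fin n)) := hi ▸ Finset.mem_filter.mpr ⟨Finset.mem_univ _, hc⟩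
    exact hj (Finset.mem_singleton.mp this)
  have hi2 : h₀ i ^ 2 = 1 := by
    rcases hval i with h' | h' | h' <;> simp [h'] at hi0 ⊢
  have hnb' : ∀ j, |h j ^ 2 - h₀ j ^ 2| ≤ ρ := by
    intro j; have := hnb j; simpa using this
  have hhi : 1 - ρ ≤ h i ^ 2 := by
    have := abs_le.mp (hnb' i); rw [hi2] at this; linarith [this.1]
  have hhj : ∀ j, j ≠ i → h j ^ 2 ≤ ρ := by
    intro j hj
    have := abs_le.mp (hnb' j); rw [hjz j hj] at this
    simpa using this.2
  have hsplit : ∀ f : Fin n → ℝ, ∑ j, f j = f i + ∑ j ∈ {i}ᶜ, f j := by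
    intro f; exact (Fintype.sum_eq_add_sum_compl i f)
  set A := ∑ j ∈ ({i}ᶜ : Finset (Fin n)), h j ^ 2 with hA
  set B := ∑ j ∈ ({i}ᶜ : Finset (Fin n)), z j ^ 2 with hB
  have hAv : h i ^ 2 + A = 1 := by rw [hA, ← hsplit (fun j => h j ^ 2), hh]
  have hBv : z i ^ 2 + B = 1 := by rw [hB, ← hsplit (fun j => z j ^ 2), hz]
  have hBnn : 0 ≤ B := Finset.sum_nonneg fun j _ => sq_nonneg _
  have hAρ : A ≤ ρ := by nlinarith
  have hcs : (∑ j ∈ ({i}ᶜ : Finset (Fin n)), z j * h j) ^ 2 ≤ B * A :=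
    Finset.sum_mul_sq_le_sq_mul_sq _ _ _
  have hdot : z i * h i + ∑ j ∈ ({i}ᶜ : Finset (Fin n)), z j * h j = 0 := by
    rw [← hsplit (fun j => z j * h j)]
    simpa [dotProduct] using horth
  have hzihi : (z i * h i) ^ 2 ≤ ρ := by
    have : (z i * h i) ^ 2 = (∑ j ∈ ({i}ᶜ : Finset (Fin n)), z j * h j) ^ 2 := by
      have : z i * h i = -(∑ j ∈ ({i}ᶜ : Finset (Fin n)), z j * h j) := by linarith
      rw [this]; ring
    rw [this]
    calc (∑ j ∈ ({i}ᶜ : Finset (Fin n)), z j * h j) ^ 2 ≤ B * A := hcs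
      _ ≤ 1 * ρ := by nlinarith
      _ = ρ := one_mul ρ
  have hsum2 : ∑ j, h j ^ 2 * z j ^ 2 ≤ 2 * ρ := by
    rw [hsplit (fun j => h j ^ 2 * z j ^ 2)]
    have h1 : h i ^ 2 * z i ^ 2 ≤ ρ := by
      have : h i ^ 2 * z i ^ 2 = (z i * h i) ^ 2 := by ring
      rw [this]; exact hzihi
    have h2 : ∑ j ∈ ({i}ᶜ : Finset (Fin n)), h j ^ 2 * z j ^ 2 ≤ ρ * B := by
      rw [hB, Finset.mul_sum]
      apply Finset.sum_le_sum
      intro j hj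
      have hji : j ≠ i := by simpa using hj
      exact mul_le_mul_of_nonneg_right (hhj j hji) (sq_nonneg _)
    nlinarith
  have hT : (1 - ρ) ^ 2 ≤ ∑ j, h j ^ 4 := by
    calc (1-ρ)^2 ≤ (h i ^ 2)^2 := by nlinarith
    _ = h i ^ 4 := by ring
    _ ≤ ∑ j, h j ^ 4 :=
        Finset.single_le_sum (f := fun j => h j ^ 4) (fun j _ => by positivity)
          (Finset.mem_univ i)
  have key : 1 - 24 * Real.sqrt ρ ≤ (1-ρ)^2 - 3*(2*ρ) := by
    have := (sqrt_facts' hρ1 hρ2).1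
    nlinarith [sq_nonneg ρ]
  linarith [hT, hsum2]

lemma core2' {n : ℕ} (θ ρ : ℝ) (hθ1 : 0 < θ) (hθ2 : θ < 1 / 3)
    (hρ1 : 0 < ρ) (hρ2 : ρ < 1 / 1000)
    (r : ℕ) (h₀ h : Fin n → ℝ) (hr : 1 < r) (hst : IsStatPoint h₀ r)
    (hh : ∑ j, h j ^ 2 = 1) (hnb : nbhd ρ r h₀ h) :
    ∃ z : Fin n → ℝ, (∑ j, z j ^ 2 = 1) ∧ z ⬝ᵥ h = 0 ∧
      (∑ j, h j ^ 4) - 3 * ∑ j, h j ^ 2 * z j ^ 2 ≤ (-2 + 24 * Real.sqrt ρ) / r := by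
  obtain ⟨hval, hcard⟩ := hst
  have hrR : (1:ℝ) < r := by exact_mod_cast hr
  have hrpos : (0:ℝ) < r := by linarith
  have hsq : ∀ j, h₀ j ≠ 0 → h₀ j ^ 2 = 1 / r := by
    intro j hj
    have hsr : Real.sqrt r ^ 2 = r := Real.sq_sqrt hrpos.le
    rcases hval j with h' | h' | h' <;> simp [h'] at hj ⊢ <;> rw [div_pow, hsr] <;> norm_num
  have hexp : (1+ρ)/(r:ℝ) = 1/r + ρ/r := by ring
  have hrinv : (0:ℝ) < 1/r := by positivity
  have hub : ∀ j, h j ^ 2 ≤ (1 + ρ) / r := by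
    intro j
    have hj2 := (abs_le.mp (hnb j)).2
    by_cases hj : h₀ j = 0
    · rw [hj] at hj2; simp at hj2; linarith
    · rw [hsq j hj] at hj2; linarith
  have hlb : ∀ j, h₀ j ≠ 0 → (1 - ρ)/r ≤ h j ^ 2 := by
    intro j hj
    have hj1 := (abs_le.mp (hnb j)).1
    rw [hsq j hj] at hj1
    have : (1-ρ)/(r:ℝ) = 1/r - ρ/r := by ring
    linarith
  obtain ⟨i, hiS, k, hkS, hik⟩ := Finset.one_lt_card.mp (hcard ▸ hr)
  have hi0 : h₀ i ≠ 0 := (Finset.mem_filter.mp hiS).2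
  have hk0 : h₀ k ≠ 0 := (Finset.mem_filter.mp hkS).2
  set a := h i ^ 2 with ha
  set b := h k ^ 2 with hb
  have hm : (0:ℝ) < (1-ρ)/r := div_pos (by linarith) hrpos
  have hal : (1-ρ)/r ≤ a := hlb i hi0
  have hbl : (1-ρ)/r ≤ b := hlb k hk0
  have hab : (0:ℝ) < a + b := by linarith
  set s := Real.sqrt (a + b) with hsdef
  have hs2 : s ^ 2 = a + b := Real.sq_sqrt hab.le
  have hspos : 0 < s := Real.sqrt_pos.mpr hab
  set z : Fin n → ℝ := fun j => if j = i then h k / s else if j = k then -(h i) / s else 0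
    with hzdef
  have hzi : z i = h k / s := by simp [hzdef]
  have hzk : z k = -(h i) / s := by simp [hzdef, hik.symm]
  have hzo : ∀ j, j ≠ i → j ≠ k → z j = 0 := by intro j h1 h2; simp [hzdef, h1, h2]
  have hsum_pair : ∀ f : Fin n → ℝ, (∀ j, j ≠ i → j ≠ k → f j = 0) →
      ∑ j, f j = f i + f k := by
    intro f hf
    rw [← Finset.sum_subset (Finset.subset_univ ({i, k} : Finset (Fin n)))
      (fun j _ hj => by
        simp only [Finset.mem_insert, Finset.mem_singleton, not_or] at hj
        exact hf j hj.1 hj.2)]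
    exact Finset.sum_pair hik
  have hzsum : ∑ j, z j ^ 2 = 1 := by
    rw [hsum_pair (fun j => z j ^ 2) (fun j h1 h2 => by simp [hzdef, h1, h2]),
      hzi, hzk]
    field_simp
    rw [hs2]; simp only [ha, hb]; ring
  refine ⟨z, hzsum, ?_, ?_⟩
  · show ∑ j, z j * h j = 0
    rw [hsum_pair (fun j => z j * h j) (fun j h1 h2 => by simp [hzdef, h1, h2]),
      hzi, hzk]
    field_simp
    ring
  · have hhz2 : ∑ j, h j ^ 2 * z j ^ 2 = (a * b + b * a) / (a + b) := by
      rw [hsum_pair (fun j => h j ^ 2 * z j ^ 2) (fun j h1 h2 => by simp [hzdef, h1, h2]),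
        hzi, hzk]
      rw [eq_div_iff (by linarith : a + b ≠ 0), ← hs2]
      simp only [ha, hb]
      field_simp
    have hT : ∑ j, h j ^ 4 ≤ (1 + ρ) / r := by
      calc ∑ j, h j ^ 4 = ∑ j, h j ^ 2 * h j ^ 2 := by
            apply Finset.sum_congr rfl; intro j _; ring
        _ ≤ ∑ j, ((1+ρ)/r) * h j ^ 2 := by
            apply Finset.sum_le_sum; intro j _
            exact mul_le_mul_of_nonneg_right (hub j) (sq_nonneg _)
        _ = (1+ρ)/r := by rw [← Finset.mul_sum, hh, mul_one]
    have hhm : 3 * ((1-ρ)/r) ≤ 3 * ((a*b + b*a)/(a+b)) := by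
      have h1 : ((1-ρ)/r) * (a + b) ≤ a*b + b*a := by nlinarith
      have h2 : (1-ρ)/r ≤ (a*b + b*a)/(a+b) := by
        rw [le_div_iff₀ hab]; exact h1
      linarith
    rw [hhz2]
    have hρs := (sqrt_facts' hρ1 hρ2).1
    have hfin : (1+ρ)/(r:ℝ) - 3*((1-ρ)/r) ≤ (-2 + 24*Real.sqrt ρ)/r := by
      have heq : (1+ρ)/(r:ℝ) - 3*((1-ρ)/r) = (4*ρ - 2)/r := by ring
      rw [heq, div_le_div_iff₀ hrpos hrpos]
      nlinarith
    linarith [hT, hhm, hfin]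

lemma sqrt2n_le' {n : ℕ} (hn : 0 < n) : Real.sqrt (2 * n) ≤ Real.sqrt 2 * n := by
  have hn1 : (1:ℝ) ≤ n := by exact_mod_cast hn
  rw [show Real.sqrt 2 * n = Real.sqrt (2 * n^2) by
    rw [Real.sqrt_mul (by norm_num), Real.sqrt_sq (by linarith)]]
  apply Real.sqrt_le_sqrt
  nlinarith

lemma sqrt2_le' : Real.sqrt 2 ≤ 3/2 := by
  nlinarith [Real.sq_sqrt (by norm_num : (0:ℝ) ≤ 2), Real.sqrt_nonneg 2]

lemma keys1' {n : ℕ} (hn : 0 < n) {ρ : ℝ} (hρ1 : 0 < ρ) (hρ2 : ρ < 1 / 1000) :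
    2 * (n:ℝ) * (Real.sqrt (2*n) * (ρ^2/n^2)) + 4 * (ρ^2/n^2)^2 * n^3 ≤ ρ := by
  have hn1 : (1:ℝ) ≤ n := by exact_mod_cast hn
  have hn0 : (0:ℝ) < n := by linarith
  have hε0 : (0:ℝ) < ρ^2/n^2 := by positivity
  have e1 : 2 * (n:ℝ) * (Real.sqrt (2*n) * (ρ^2/n^2)) ≤ 3 * ρ ^ 2 := by
    have heq : 2 * (n:ℝ) * (Real.sqrt (2*n) * (ρ^2/n^2))
        = 2 * (Real.sqrt (2*n) * (ρ^2/n)) := by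
      field_simp
    rw [heq]
    have e2 : Real.sqrt (2*n) * (ρ^2/n) ≤ (Real.sqrt 2 * n) * (ρ^2/n) :=
      mul_le_mul_of_nonneg_right (sqrt2n_le' hn) (by positivity)
    have e3 : (Real.sqrt 2 * n) * (ρ^2/n) = Real.sqrt 2 * ρ^2 := by field_simp
    nlinarith [sqrt2_le', sq_nonneg ρ]
  have e5 : 4 * (ρ^2/n^2)^2 * (n:ℝ)^3 ≤ 4 * ρ^4 := by
    have heq : 4 * (ρ^2/n^2)^2 * (n:ℝ)^3 = 4 * ρ^4 / n := by field_simp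
    rw [heq, div_le_iff₀ hn0]
    nlinarith [pow_pos hρ1 4]
  have hρle : ρ ≤ 1 := by linarith
  have h2 : ρ^2 ≤ ρ/1000 := by nlinarith
  have h4 : ρ^4 ≤ ρ^2 := by nlinarith [sq_nonneg ρ, sq_nonneg (ρ^2), pow_pos hρ1 2]
  linarith

set_option maxHeartbeats 2000000 in
lemma near_stat' {n : ℕ} (hn : 0 < n) (ρ : ℝ) (hρ1 : 0 < ρ) (hρ2 : ρ < 1 / 1000)
    (h : Fin n → ℝ) (hh : ∑ j, h j ^ 2 = 1)
    (hG : ∑ j, h j ^ 2 * ((∑ l, h l ^ 4) - h j ^ 2) ^ 2 < (ρ ^ 2 / n ^ 2) ^ 2) :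
    ∃ (r : ℕ) (h₀ : Fin n → ℝ), 0 < r ∧ IsStatPoint h₀ r ∧ nbhd ρ r h₀ h := by
  have hn1 : (1:ℝ) ≤ n := by exact_mod_cast hn
  have hn0 : (0:ℝ) < n := by linarith
  set ε : ℝ := ρ ^ 2 / n ^ 2 with hε
  have hε0 : 0 < ε := by positivity
  set T : ℝ := ∑ l, h l ^ 4 with hT
  have hTn : 1 ≤ (n:ℝ) * T := by
    have := sq_sum_le_card_mul_sum_sq (s := (Finset.univ : Finset (Fin n)))
      (f := fun j => h j ^ 2)
    rw [hh] at this
    simp only [Finset.card_univ, Fintype.card_fin] at this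
    calc (1:ℝ) = 1 ^ 2 := by norm_num
      _ ≤ (n:ℝ) * ∑ j, (h j ^ 2) ^ 2 := by exact_mod_cast this
      _ = (n:ℝ) * T := by rw [hT]; congr 1; apply Finset.sum_congr rfl; intro j _; ring
  have hTpos : 0 < T := by nlinarith
  have hGj : ∀ j, h j ^ 2 * (T - h j ^ 2) ^ 2 ≤ ε ^ 2 := by
    intro j
    have h1 : h j ^ 2 * (T - h j ^ 2) ^ 2 ≤ ∑ l, h l ^ 2 * (T - h l ^ 2) ^ 2 :=
      Finset.single_le_sum (f := fun l => h l ^ 2 * (T - h l ^ 2) ^ 2)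
        (fun l _ => by positivity) (Finset.mem_univ j)
    exact le_of_lt (lt_of_le_of_lt h1 hG)
  set S : Finset (Fin n) := Finset.univ.filter (fun j => T / 2 ≤ h j ^ 2) with hS
  set r : ℕ := S.card with hr
  have hrn : (r:ℝ) ≤ n := by
    have := Finset.card_le_univ S
    simp only [Finset.card_univ, Fintype.card_fin] at this
    exact_mod_cast this
  set δ : ℝ := Real.sqrt (2 * n) * ε with hδ
  have hδ0 : 0 ≤ δ := by positivity
  have hδ2 : δ ^ 2 = 2 * n * ε ^ 2 := by
    rw [hδ, mul_pow, Real.sq_sqrt (by positivity)]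
  have claim1 : ∀ j ∈ S, |T - h j ^ 2| ≤ δ := by
    intro j hj
    have hjS : T / 2 ≤ h j ^ 2 := (Finset.mem_filter.mp hj).2
    have hq : (T - h j ^ 2) ^ 2 ≤ δ ^ 2 := by
      rw [hδ2]
      have e1 : 2*(n:ℝ)*(h j ^ 2 * (T - h j ^ 2) ^ 2) ≤ 2*n*ε^2 :=
        mul_le_mul_of_nonneg_left (hGj j) (by positivity)
      have e2 : 0 ≤ (2 * h j ^ 2 - T) * ((T - h j ^ 2) ^ 2) * n :=
        mul_nonneg (mul_nonneg (by linarith) (sq_nonneg _)) hn0.le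
      have e3 : 0 ≤ ((n:ℝ) * T - 1) * ((T - h j ^ 2) ^ 2) :=
        mul_nonneg (by linarith) (sq_nonneg _)
      nlinarith [e1, e2, e3]
    calc |T - h j ^ 2| = Real.sqrt ((T - h j ^ 2) ^ 2) := (Real.sqrt_sq_eq_abs _).symm
      _ ≤ Real.sqrt (δ ^ 2) := Real.sqrt_le_sqrt hq
      _ = δ := Real.sqrt_sq hδ0
  have claim2 : ∀ j, j ∉ S → h j ^ 2 ≤ 4 * ε ^ 2 * n ^ 2 := by
    intro j hj
    have hjS : h j ^ 2 < T / 2 := by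
      by_contra hc
      exact hj (Finset.mem_filter.mpr ⟨Finset.mem_univ _, by linarith⟩)
    have e2 : h j ^ 2 * (T/2) ^ 2 ≤ h j ^ 2 * (T - h j ^ 2) ^ 2 := by
      apply mul_le_mul_of_nonneg_left _ (sq_nonneg _)
      apply pow_le_pow_left₀ (by positivity) (by linarith)
    have e3 : h j ^ 2 ≤ h j ^ 2 * ((n:ℝ) * T) ^ 2 := by
      nlinarith [mul_nonneg (sq_nonneg (h j))
        (by nlinarith : (0:ℝ) ≤ ((n:ℝ)*T)^2 - 1)]
    have e5 : 4 * (n:ℝ)^2 * (h j ^ 2 * (T/2)^2) ≤ 4 * (n:ℝ)^2 * ε^2 :=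
      mul_le_mul_of_nonneg_left (le_trans e2 (hGj j)) (by positivity)
    calc h j ^ 2 ≤ h j ^ 2 * ((n:ℝ) * T) ^ 2 := e3
      _ = 4 * (n:ℝ)^2 * (h j ^ 2 * (T/2)^2) := by ring
      _ ≤ 4 * (n:ℝ)^2 * ε^2 := e5
      _ = 4 * ε^2 * n^2 := by ring
  have key1 : 2 * (n:ℝ) * δ + 4 * ε^2 * n^3 ≤ ρ := by
    rw [hδ, hε]; exact keys1' hn hρ1 hρ2
  have key2 : 4 * ε^2 * (n:ℝ)^3 ≤ ρ := by
    have h2 : 0 ≤ 2 * (n:ℝ) * δ := by positivity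
    linarith
  have hr1 : 0 < r := by
    rcases Nat.eq_zero_or_pos r with h0 | h1
    · exfalso
      have hSe : S = ∅ := Finset.card_eq_zero.mp h0
      have : (1:ℝ) ≤ (n:ℝ) * (4 * ε^2 * n^2) := by
        calc (1:ℝ) = ∑ j, h j ^ 2 := hh.symm
          _ ≤ ∑ _j : Fin n, 4 * ε^2 * (n:ℝ)^2 := by
              apply Finset.sum_le_sum
              intro j _
              exact claim2 j (by rw [hSe]; exact Finset.notMem_empty j)
          _ = (n:ℝ) * (4 * ε^2 * n^2) := by
              rw [Finset.sum_const, Finset.card_univ, Fintype.card_fin, nsmul_eq_mul]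
      have heq : (n:ℝ) * (4 * ε^2 * n^2) = 4 * ε^2 * n^3 := by ring
      linarith
    · exact h1
  have hrpos : (0:ℝ) < r := by exact_mod_cast hr1
  have hsum_split : ∑ j ∈ S, h j ^ 2 + ∑ j ∈ Sᶜ, h j ^ 2 = 1 := by
    rw [Finset.sum_add_sum_compl, hh]
  have hSc_nonneg : 0 ≤ ∑ j ∈ Sᶜ, h j ^ 2 := Finset.sum_nonneg fun j _ => sq_nonneg _
  have hSc_le : ∑ j ∈ Sᶜ, h j ^ 2 ≤ (n:ℝ) * (4 * ε^2 * n^2) := by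
    calc ∑ j ∈ Sᶜ, h j ^ 2 ≤ ∑ _j ∈ Sᶜ, 4 * ε^2 * (n:ℝ)^2 := by
          apply Finset.sum_le_sum
          intro j hj
          exact claim2 j (Finset.mem_compl.mp hj)
      _ = (Sᶜ.card : ℝ) * (4 * ε^2 * n^2) := by rw [Finset.sum_const, nsmul_eq_mul]
      _ ≤ (n:ℝ) * (4 * ε^2 * n^2) := by
          apply mul_le_mul_of_nonneg_right _ (by positivity)
          have := Finset.card_le_univ Sᶜ
          simp only [Finset.card_univ, Fintype.card_fin] at this
          exact_mod_cast this
  have hS_low : (r:ℝ) * (T - δ) ≤ ∑ j ∈ S, h j ^ 2 := by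
    have := Finset.card_nsmul_le_sum S (fun j => h j ^ 2) (T - δ)
      (fun j hj => by
        have := abs_le.mp (claim1 j hj); show T - δ ≤ h j ^ 2; linarith [this.2])
    rwa [nsmul_eq_mul] at this
  have hS_high : ∑ j ∈ S, h j ^ 2 ≤ (r:ℝ) * (T + δ) := by
    have := Finset.sum_le_card_nsmul S (fun j => h j ^ 2) (T + δ)
      (fun j hj => by
        have := abs_le.mp (claim1 j hj); show h j ^ 2 ≤ T + δ; linarith [this.1])
    rwa [nsmul_eq_mul] at this
  have hrT_low : (r:ℝ) * T - r * δ ≤ 1 := by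
    have e : (r:ℝ) * (T - δ) = r * T - r * δ := by ring
    linarith
  have hrT_high : 1 ≤ (r:ℝ) * T + r * δ + 4 * ε^2 * n^3 := by
    have e : (r:ℝ) * (T + δ) = r * T + r * δ := by ring
    have heq : (n:ℝ) * (4 * ε^2 * n^2) = 4 * ε^2 * n^3 := by ring
    linarith
  have hrδ : (r:ℝ) * δ ≤ n * δ := mul_le_mul_of_nonneg_right hrn hδ0
  have inS : ∀ j ∈ S, |h j ^ 2 - 1 / r| ≤ ρ / r := by
    intro j hj
    have hja := abs_le.mp (claim1 j hj)
    have hnum : |(r:ℝ) * h j ^ 2 - 1| ≤ ρ := by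
      rw [abs_le]
      constructor
      · have h5 : (r:ℝ) * (T - δ) ≤ r * h j ^ 2 := by
          apply mul_le_mul_of_nonneg_left _ hrpos.le
          linarith [hja.2]
        have e : (r:ℝ) * (T - δ) = r * T - r * δ := by ring
        linarith
      · have h5 : (r:ℝ) * h j ^ 2 ≤ r * (T + δ) := by
          apply mul_le_mul_of_nonneg_left _ hrpos.le
          linarith [hja.1]
        have e : (r:ℝ) * (T + δ) = r * T + r * δ := by ring
        linarith
    have heq : h j ^ 2 - 1 / (r:ℝ) = ((r:ℝ) * h j ^ 2 - 1) / r := by field_simp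
    rw [heq, abs_div, abs_of_pos hrpos]
    gcongr
  have outS : ∀ j, j ∉ S → h j ^ 2 ≤ ρ / r := by
    intro j hj
    have h1 := claim2 j hj
    rw [le_div_iff₀ hrpos]
    calc h j ^ 2 * r ≤ (4 * ε^2 * n^2) * r := by
          apply mul_le_mul_of_nonneg_right h1 hrpos.le
      _ ≤ (4 * ε^2 * n^2) * n := by
          apply mul_le_mul_of_nonneg_left hrn (by positivity)
      _ = 4 * ε^2 * n^3 := by ring
      _ ≤ ρ := key2
  set h₀ : Fin n → ℝ := fun j => if j ∈ S then
    (if 0 ≤ h j then 1 / Real.sqrt r else -(1 / Real.sqrt r)) else 0 with hh₀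
  have hsrpos : 0 < Real.sqrt r := Real.sqrt_pos.mpr hrpos
  have hsupport : ∀ j, h₀ j ≠ 0 ↔ j ∈ S := by
    intro j
    constructor
    · intro hne
      by_contra hc
      apply hne
      simp [hh₀, hc]
    · intro hjS
      simp only [hh₀, if_pos hjS]
      by_cases h0 : 0 ≤ h j <;> simp [h0] <;> positivity
  have hstat : IsStatPoint h₀ r := by
    constructor
    · intro j
      by_cases hjS : j ∈ S
      · by_cases h0 : 0 ≤ h j
        · right; left; simp [hh₀, hjS, h0]
        · right; right; simp [hh₀, hjS, h0]
      · left; simp [hh₀, hjS]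
    · rw [hr]
      congr 1
      ext j
      simp only [Finset.mem_filter, Finset.mem_univ, true_and]
      exact hsupport j
  have hsq0 : ∀ j ∈ S, h₀ j ^ 2 = 1 / r := by
    intro j hjS
    have : (1 / Real.sqrt r) ^ 2 = 1 / r := by
      rw [div_pow, one_pow, Real.sq_sqrt hrpos.le]
    by_cases h0 : 0 ≤ h j <;> simp only [hh₀, if_pos hjS, if_pos, if_neg, h0] <;>
      simp [h0, this]
  refine ⟨r, h₀, hr1, hstat, ?_⟩
  intro j
  by_cases hjS : j ∈ S
  · rw [hsq0 j hjS]; exact inS j hjS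
  · have h0 : h₀ j = 0 := by simp [hh₀, hjS]
    rw [h0]
    have hout := outS j hjS
    have e : |h j ^ 2 - 0 ^ 2| = h j ^ 2 := by
      rw [show h j ^ 2 - 0 ^ 2 = h j ^ 2 by ring, abs_of_nonneg (sq_nonneg _)]
    rw [e]
    exact hout


/-- Lemma 1: geometric structure of the expected objective on the sphere. -/
theorem stmt1 {n : ℕ} (hn : 0 < n) (θ ρ : ℝ) (hθ1 : 0 < θ) (hθ2 : θ < 1 / 3)
    (hρ1 : 0 < ρ) (hρ2 : ρ < 1 / 1000) :
    (∀ h ∈ H1'' n ρ,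
      (0 : ℝ) < (n : ℝ) * θ * (1 - 3 * θ) * (1 - 24 * Real.sqrt ρ) ∧
      ∀ z : Fin n → ℝ, enorm2 z = 1 → z ⬝ᵥ h = 0 →
        (n : ℝ) * θ * (1 - 3 * θ) * (1 - 24 * Real.sqrt ρ) ≤ z ⬝ᵥ (Mmat θ h).mulVec z) ∧
    (∀ (r : ℕ) (h₀ h : Fin n → ℝ), 1 < r → IsStatPoint h₀ r → enorm2 h = 1 → nbhd ρ r h₀ h →
      -((n : ℝ) * θ * (1 - 3 * θ) * (2 - 24 * Real.sqrt ρ)) / r < 0 ∧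
      ∃ z : Fin n → ℝ, enorm2 z = 1 ∧ z ⬝ᵥ h = 0 ∧
        z ⬝ᵥ (Mmat θ h).mulVec z ≤ -((n : ℝ) * θ * (1 - 3 * θ) * (2 - 24 * Real.sqrt ρ)) / r) ∧
    (∀ h ∈ H3'' n ρ,
      (0 : ℝ) < θ * (1 - 3 * θ) * ρ ^ 2 / n ∧
      θ * (1 - 3 * θ) * ρ ^ 2 / n ≤ enorm2 (gvec θ h)) := by
  have hn0 : (0:ℝ) < n := by exact_mod_cast hn
  have h13 : 0 < 1 - 3 * θ := by linarith
  have hc : 0 < (n:ℝ) * θ * (1 - 3 * θ) := mul_pos (mul_pos hn0 hθ1) h13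
  have hsf := sqrt_facts' hρ1 hρ2
  refine ⟨?_, ?_, ?_⟩
  · -- part (i)
    rintro h ⟨hnorm, h₀, hstat, hnb⟩
    refine ⟨mul_pos hc (by linarith [hsf.2]), ?_⟩
    intro z hz hzh
    rw [quadform' θ h z (enorm2_eq_one' hz) hzh]
    exact mul_le_mul_of_nonneg_left
      (core1' θ ρ hθ1 hθ2 hρ1 hρ2 h h₀ hstat hnb (enorm2_eq_one' hnorm) z
        (enorm2_eq_one' hz) hzh) hc.le
  · -- part (ii)
    intro r h₀ h hr hstat hnorm hnb
    have hrR : (0:ℝ) < r := by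
      have : 0 < r := by omega
      exact_mod_cast this
    constructor
    · apply div_neg_of_neg_of_pos _ hrR
      exact neg_lt_zero.mpr (mul_pos hc (by linarith [hsf.2]))
    · obtain ⟨z, hzs, hzo, hzb⟩ := core2' θ ρ hθ1 hθ2 hρ1 hρ2 r h₀ h hr hstat
        (enorm2_eq_one' hnorm) hnb
      refine ⟨z, ?_, hzo, ?_⟩
      · rw [enorm2, hzs]; exact Real.sqrt_one
      · rw [quadform' θ h z hzs hzo]
        calc (n:ℝ) * θ * (1 - 3*θ) * ((∑ j, h j ^ 4) - 3 * ∑ j, h j ^ 2 * z j ^ 2)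
            ≤ (n:ℝ) * θ * (1 - 3*θ) * ((-2 + 24 * Real.sqrt ρ) / r) :=
              mul_le_mul_of_nonneg_left hzb hc.le
          _ = -((n : ℝ) * θ * (1 - 3 * θ) * (2 - 24 * Real.sqrt ρ)) / r := by ring
  · -- part (iii)
    rintro h ⟨hu, hnot⟩
    have hnorm : enorm2 h = 1 := hu
    have hh : ∑ j, h j ^ 2 = 1 := enorm2_eq_one' hnorm
    refine ⟨div_pos (mul_pos (mul_pos hθ1 h13) (pow_pos hρ1 2)) hn0, ?_⟩
    by_contra hcon
    push_neg at hcon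
    set c := (n:ℝ) * θ * (1 - 3 * θ) with hcdef
    set T := ∑ l, h l ^ 4 with hTdef
    have hgj : ∀ j, gvec θ h j = c * (h j * (T - h j ^ 2)) := by
      intro j
      simp only [gvec, Pi.smul_apply, Pi.sub_apply, smul_eq_mul, hcdef, hTdef]
      ring
    have hGnn : 0 ≤ ∑ j, h j ^ 2 * (T - h j ^ 2) ^ 2 :=
      Finset.sum_nonneg fun j _ => by positivity
    have hsq : ∑ j, gvec θ h j ^ 2 = c^2 * ∑ j, h j ^ 2 * (T - h j ^ 2) ^ 2 := by
      rw [Finset.mul_sum]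
      apply Finset.sum_congr rfl
      intro j _
      rw [hgj j]; ring
    have henorm : enorm2 (gvec θ h)
        = c * Real.sqrt (∑ j, h j ^ 2 * (T - h j ^ 2) ^ 2) := by
      rw [enorm2, hsq, Real.sqrt_mul (sq_nonneg c), Real.sqrt_sq hc.le]
    have heq : θ * (1 - 3 * θ) * ρ ^ 2 / (n:ℝ) = c * (ρ^2 / n^2) := by
      rw [hcdef]; field_simp
    rw [henorm, heq] at hcon
    have hGlt : Real.sqrt (∑ j, h j ^ 2 * (T - h j ^ 2) ^ 2) < ρ^2 / n^2 :=
      lt_of_mul_lt_mul_left hcon hc.le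
    have hG : ∑ j, h j ^ 2 * ((∑ l, h l ^ 4) - h j ^ 2) ^ 2 < (ρ ^ 2 / (n:ℝ) ^ 2) ^ 2 := by
      have h1 : ∑ j, h j ^ 2 * (T - h j ^ 2) ^ 2
          = Real.sqrt (∑ j, h j ^ 2 * (T - h j ^ 2) ^ 2) ^ 2 := (Real.sq_sqrt hGnn).symm
      rw [← hTdef, h1]
      exact pow_lt_pow_left₀ hGlt (Real.sqrt_nonneg _) (by norm_num)
    obtain ⟨r, h₀, hrp, hstat, hnb⟩ := near_stat' hn ρ hρ1 hρ2 h hh hG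
    apply hnot
    rcases Nat.lt_or_ge 1 r with h2 | h2
    · right
      exact ⟨hnorm, r, h₀, h2, hstat, hnb⟩
    · left
      have hr1 : r = 1 := by omega
      subst hr1
      exact ⟨hnorm, h₀, hstat, hnb⟩
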